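/- (Grötzsch's inequality via length-area) Let f be a continuously differentiable diffeomorphism from the rectangle R = (0,a)×(0,b) onto R' = (0,a')×(0,b'), extending continuously to the closure, mapping the vertical side {0}×[0,b] into {0}×[0,b'], the side {a}×[0,b] into {a'}×[0,b'], and similarly matching the horizontal sides, with positive Jacobian. If the dilatation quotient of f is everywhere at most C, then b/a ≤ C·(b'/a'). -/

import Mathlib

/-! Along each horizontal segment of `R` the image curve joins the two vertical sides of `R'`,
so `a' ≤ ∫ ‖∂ₓf‖ dx`. By Cauchy–Schwarz and the pointwise bound `‖∂ₓf‖² ≤ C · Jac f`,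
`a'² ≤ a C ∫ Jac f dx`. Integrating over the height `b` and using `∫_R Jac f = |R'| = a'b'`
gives `a'² b ≤ a C a' b'`. -/

/-- The dilatation quotient of a real-linear map `L : ℂ → ℂ`, written as
`L z = a z + b z̄`: it equals `(|a| + |b|)/(|a| − |b|)`, the ratio of the larger to the
smaller singular value when `det L > 0`. -/
noncomputable def dilatation (L : ℂ →L[ℝ] ℂ) : ℝ :=
  (‖(L 1 - Complex.I * L Complex.I) / 2‖ +
      ‖(L 1 + Complex.I * L Complex.I) / 2‖) /
    (‖(L 1 - Complex.I * L Complex.I) / 2‖ -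
      ‖(L 1 + Complex.I * L Complex.I) / 2‖)

open MeasureTheory Complex Set
open scoped ENNReal

section DilatationQuotient

variable (L : ℂ →L[ℝ] ℂ)

theorem det_eq_re_mul_im_sub_im_mul_re :
    LinearMap.det L.toLinearMap = (L 1).re * (L I).im - (L 1).im * (L I).re := by
  rw [← LinearMap.det_toMatrix basisOneI, Matrix.det_fin_two]
  simp [LinearMap.toMatrix_apply]
  ring

theorem det_eq_norm_sq_sub_norm_sq :
    LinearMap.det L.toLinearMap = ‖(L 1 - I * L I) / 2‖ ^ 2 - ‖(L 1 + I * L I) / 2‖ ^ 2 := by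
  rw [det_eq_re_mul_im_sub_im_mul_re]
  simp only [Complex.sq_norm, normSq_apply, div_re, div_im, sub_re, sub_im, add_re, add_im, mul_re,
    mul_im, I_re, I_im]
  norm_num
  ring

variable {L}

theorem norm_sub_pos_of_det_pos (hdet : 0 < LinearMap.det L.toLinearMap) :
    0 < ‖(L 1 - I * L I) / 2‖ - ‖(L 1 + I * L I) / 2‖ := by
  rw [det_eq_norm_sq_sub_norm_sq] at hdet
  nlinarith [norm_nonneg ((L 1 - I * L I) / 2), norm_nonneg ((L 1 + I * L I) / 2)]

theorem one_le_dilatation (hdet : 0 < LinearMap.det L.toLinearMap) : 1 ≤ dilatation L := by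
  rw [dilatation, le_div_iff₀ (norm_sub_pos_of_det_pos hdet)]
  linarith [norm_nonneg ((L 1 + I * L I) / 2)]

theorem norm_apply_one_sq_le_dilatation_mul_det (hdet : 0 < LinearMap.det L.toLinearMap) :
    ‖L 1‖ ^ 2 ≤ dilatation L * LinearMap.det L.toLinearMap := by
  have hpos := norm_sub_pos_of_det_pos hdet
  have hsplit : L 1 = (L 1 - I * L I) / 2 + (L 1 + I * L I) / 2 := by ring
  calc ‖L 1‖ ^ 2 ≤ (‖(L 1 - I * L I) / 2‖ + ‖(L 1 + I * L I) / 2‖) ^ 2 := by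
        gcongr
        exact (congrArg norm hsplit).trans_le (norm_add_le _ _)
    _ = dilatation L * LinearMap.det L.toLinearMap := by
        rw [dilatation, det_eq_norm_sq_sub_norm_sq]
        field_simp
        ring

theorem enorm_apply_one_sq_le_mul_det {C : ℝ} (hdet : 0 < LinearMap.det L.toLinearMap)
    (hdil : dilatation L ≤ C) :
    ‖L 1‖ₑ ^ 2 ≤ ENNReal.ofReal C * ENNReal.ofReal (LinearMap.det L.toLinearMap) := by
  rw [← ofReal_norm, ← ENNReal.ofReal_pow (norm_nonneg _), ← ENNReal.ofReal_mul' hdet.le]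
  exact ENNReal.ofReal_le_ofReal <| (norm_apply_one_sq_le_dilatation_mul_det hdet).trans <|
    mul_le_mul_of_nonneg_right hdil hdet.le

end DilatationQuotient

theorem lintegral_sq_le_measure_univ_mul_lintegral_sq {α : Type*} [MeasurableSpace α]
    (μ : Measure α) {g : α → ℝ≥0∞} (hg : AEMeasurable g μ) :
    (∫⁻ x, g x ∂μ) ^ 2 ≤ μ univ * ∫⁻ x, g x ^ 2 ∂μ := by
  have h := ENNReal.lintegral_mul_le_Lp_mul_Lq μ Real.HolderConjugate.two_two hg
    (g := fun _ => 1) aemeasurable_const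
  simp only [Pi.mul_apply, mul_one, ENNReal.one_rpow, lintegral_const, one_mul] at h
  have hsqrt : ∀ x : ℝ≥0∞, (x ^ (1 / 2 : ℝ)) ^ 2 = x := fun x => by
    rw [← ENNReal.rpow_natCast, ← ENNReal.rpow_mul]
    norm_num
  calc (∫⁻ x, g x ∂μ) ^ 2
      ≤ ((∫⁻ x, g x ^ (2 : ℝ) ∂μ) ^ (1 / 2 : ℝ) * μ univ ^ (1 / 2 : ℝ)) ^ 2 := by gcongr
    _ = μ univ * ∫⁻ x, g x ^ 2 ∂μ := by
      simp only [mul_pow, hsqrt, ENNReal.rpow_two, mul_comm]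

theorem enorm_sub_le_lintegral_enorm_of_hasDerivAt {E : Type*} [NormedAddCommGroup E]
    [NormedSpace ℝ E] [CompleteSpace E] {g g' : ℝ → E} {a b : ℝ} (hab : a ≤ b)
    (hcont : ContinuousOn g (Icc a b)) (hderiv : ∀ x ∈ Ioo a b, HasDerivAt g (g' x) x) :
    ‖g b - g a‖ₑ ≤ ∫⁻ x in Ioo a b, ‖g' x‖ₑ := by
  by_cases hfin : ∫⁻ x in Ioo a b, ‖g' x‖ₑ = ∞
  · simp [hfin]
  -- `g'` agrees with the measurable function `deriv g` on `Ioo a b`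
  have hmeas : AEStronglyMeasurable g' (volume.restrict (Ioo a b)) :=
    (stronglyMeasurable_deriv g).aestronglyMeasurable.congr <|
      (ae_restrict_iff' measurableSet_Ioo).2 (.of_forall fun x hx => (hderiv x hx).deriv)
  have hint : IntervalIntegrable g' volume a b :=
    (intervalIntegrable_iff_integrableOn_Ioo_of_le hab).2 ⟨hmeas, lt_top_iff_ne_top.2 hfin⟩
  calc ‖g b - g a‖ₑ = ‖∫ x in Ioo a b, g' x‖ₑ := by
        rw [← intervalIntegral.integral_eq_sub_of_hasDerivAt_of_le hab hcont hderiv hint,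
          intervalIntegral.integral_of_le hab, integral_Ioc_eq_integral_Ioo]
    _ ≤ ∫⁻ x in Ioo a b, ‖g' x‖ₑ := enorm_integral_le_lintegral_enorm _

theorem enorm_sub_le_lintegral_enorm_fderiv_one {E : Type*} [NormedAddCommGroup E]
    [NormedSpace ℝ E] [CompleteSpace E] {f : ℂ → E} {a b y : ℝ} (hab : a ≤ b)
    (hcont : ContinuousOn (fun x : ℝ => f (x + y * I)) (Icc a b))
    (hdiff : ∀ x ∈ Ioo a b, DifferentiableAt ℝ f (x + y * I)) :
    ‖f (b + y * I) - f (a + y * I)‖ₑ ≤ ∫⁻ x in Ioo a b, ‖fderiv ℝ f (x + y * I) 1‖ₑ :=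
  enorm_sub_le_lintegral_enorm_of_hasDerivAt hab hcont fun x hx => by
    have hline : HasDerivAt (fun x : ℝ => (x : ℂ) + y * I) 1 x := by
      simpa using (hasDerivAt_id x).ofReal_comp.add_const (y * I)
    exact (hdiff x hx).hasFDerivAt.comp_hasDerivAt x hline

theorem enorm_sub_sq_le_mul_lintegral_det {f : ℂ → ℂ} {a b y C : ℝ} (hab : a ≤ b)
    (hcont : ContinuousOn (fun x : ℝ => f (x + y * I)) (Icc a b))
    (hdiff : ∀ x ∈ Ioo a b, DifferentiableAt ℝ f (x + y * I))
    (hJac : ∀ x ∈ Ioo a b, 0 < LinearMap.det (fderiv ℝ f (x + y * I)).toLinearMap)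
    (hdil : ∀ x ∈ Ioo a b, dilatation (fderiv ℝ f (x + y * I)) ≤ C) :
    ‖f (b + y * I) - f (a + y * I)‖ₑ ^ 2 ≤ ENNReal.ofReal (b - a) * ENNReal.ofReal C *
      ∫⁻ x in Ioo a b, ENNReal.ofReal (LinearMap.det (fderiv ℝ f (x + y * I)).toLinearMap) := by
  have hmeas : AEMeasurable (fun x : ℝ => ‖fderiv ℝ f (x + y * I) 1‖ₑ)
      (volume.restrict (Ioo a b)) :=
    ((measurable_fderiv_apply_const ℝ f 1).comp (by fun_prop)).enorm.aemeasurable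
  calc ‖f (b + y * I) - f (a + y * I)‖ₑ ^ 2
      ≤ (∫⁻ x in Ioo a b, ‖fderiv ℝ f (x + y * I) 1‖ₑ) ^ 2 := by
        gcongr
        exact enorm_sub_le_lintegral_enorm_fderiv_one hab hcont hdiff
    _ ≤ volume (Ioo a b) * ∫⁻ x in Ioo a b, ‖fderiv ℝ f (x + y * I) 1‖ₑ ^ 2 := by
        simpa using lintegral_sq_le_measure_univ_mul_lintegral_sq _ hmeas
    _ ≤ ENNReal.ofReal (b - a) * ∫⁻ x in Ioo a b, ENNReal.ofReal C *
          ENNReal.ofReal (LinearMap.det (fderiv ℝ f (x + y * I)).toLinearMap) := by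
        rw [Real.volume_Ioo]
        gcongr ENNReal.ofReal (b - a) * ?_
        exact setLIntegral_mono' measurableSet_Ioo fun x hx =>
          enorm_apply_one_sq_le_mul_det (hJac x hx) (hdil x hx)
    _ = _ := by rw [lintegral_const_mul' _ _ ENNReal.ofReal_ne_top, mul_assoc]

theorem volume_reProdIm (s t : Set ℝ) : volume (s ×ℂ t) = volume s * volume t := by
  rw [← Measure.prod_prod, ← Measure.volume_eq_prod]
  exact volume_preserving_equiv_real_prod.measure_preimage_equiv (s ×ˢ t)

theorem setLIntegral_reProdIm {F : ℂ → ℝ≥0∞} (hF : Measurable F) (s t : Set ℝ) :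
    ∫⁻ z in s ×ℂ t, F z = ∫⁻ y in t, ∫⁻ x in s, F (x + y * I) := by
  have hpre : measurableEquivRealProd.symm ⁻¹' (s ×ℂ t) = s ×ˢ t := rfl
  rw [← volume_preserving_equiv_real_prod.symm.setLIntegral_comp_preimage_emb
      measurableEquivRealProd.symm.measurableEmbedding, hpre, Measure.volume_eq_prod,
    ← Measure.prod_restrict]
  refine (lintegral_prod_symm _
    (hF.comp measurableEquivRealProd.symm.measurable).aemeasurable).trans ?_
  simp only [Function.comp_apply, measurableEquivRealProd_symm_apply, ← mk_eq_add_mul_I]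

theorem lintegral_ofReal_det_fderiv_eq_addHaar_image {E : Type*} [NormedAddCommGroup E]
    [NormedSpace ℝ E] [FiniteDimensional ℝ E] [MeasurableSpace E] [BorelSpace E]
    (μ : Measure E) [μ.IsAddHaarMeasure] {f : E → E} {s : Set E} (hs : MeasurableSet s)
    (hdiff : ∀ x ∈ s, DifferentiableAt ℝ f x) (hinj : InjOn f s)
    (hdet : ∀ x ∈ s, 0 < (fderiv ℝ f x).det) :
    ∫⁻ x in s, ENNReal.ofReal (fderiv ℝ f x).det ∂μ = μ (f '' s) := by
  rw [← lintegral_abs_det_fderiv_eq_addHaar_image μ hs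
    (fun x hx => (hdiff x hx).hasFDerivAt.hasFDerivWithinAt) hinj]
  exact setLIntegral_congr_fun hs fun x hx => by rw [abs_of_pos (hdet x hx)]

theorem ofReal_sq_le_mul_lintegral_det_of_re_sides {f : ℂ → ℂ} {a b a' y C : ℝ} (ha : 0 < a)
    (hy : y ∈ Ioo 0 b) (hdiff : ∀ z ∈ Ioo 0 a ×ℂ Ioo 0 b, DifferentiableAt ℝ f z)
    (hcont : ContinuousOn f (closure (Ioo 0 a ×ℂ Ioo 0 b)))
    (hside0 : ∀ z ∈ closure (Ioo 0 a ×ℂ Ioo 0 b), z.re = 0 → (f z).re = 0)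
    (hsidea : ∀ z ∈ closure (Ioo 0 a ×ℂ Ioo 0 b), z.re = a → (f z).re = a')
    (hJac : ∀ z ∈ Ioo 0 a ×ℂ Ioo 0 b, 0 < LinearMap.det (fderiv ℝ f z).toLinearMap)
    (hdil : ∀ z ∈ Ioo 0 a ×ℂ Ioo 0 b, dilatation (fderiv ℝ f z) ≤ C) :
    ENNReal.ofReal a' ^ 2 ≤ ENNReal.ofReal a * ENNReal.ofReal C *
      ∫⁻ x in Ioo 0 a, ENNReal.ofReal (LinearMap.det (fderiv ℝ f (x + y * I)).toLinearMap) := by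
  have hmem : ∀ x ∈ Ioo 0 a, (x + y * I : ℂ) ∈ Ioo 0 a ×ℂ Ioo 0 b := fun x hx => by
    simpa [mem_reProdIm] using And.intro hx hy
  have hseg : MapsTo (fun x : ℝ => (x + y * I : ℂ)) (Icc 0 a)
      (closure (Ioo 0 a ×ℂ Ioo 0 b)) := fun x hx => by
    rw [closure_reProdIm, closure_Ioo ha.ne, mem_reProdIm]
    simpa using And.intro hx (subset_closure hy)
  have hwidth : ENNReal.ofReal a' ≤ ‖f (a + y * I) - f ((0 : ℝ) + y * I)‖ₑ := by
    rw [← ofReal_norm]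
    refine ENNReal.ofReal_le_ofReal (le_of_eq_of_le ?_ (re_le_norm _))
    rw [sub_re, hsidea _ (hseg ⟨ha.le, le_rfl⟩) (by simp),
      hside0 _ (hseg ⟨le_rfl, ha.le⟩) (by simp), sub_zero]
  calc ENNReal.ofReal a' ^ 2 ≤ ‖f (a + y * I) - f ((0 : ℝ) + y * I)‖ₑ ^ 2 := by gcongr
    _ ≤ ENNReal.ofReal (a - 0) * ENNReal.ofReal C *
          ∫⁻ x in Ioo 0 a, ENNReal.ofReal (LinearMap.det (fderiv ℝ f (x + y * I)).toLinearMap) :=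
        enorm_sub_sq_le_mul_lintegral_det ha.le (hcont.comp (by fun_prop) hseg)
          (fun x hx => hdiff _ (hmem x hx)) (fun x hx => hJac _ (hmem x hx))
          (fun x hx => hdil _ (hmem x hx))
    _ = _ := by rw [sub_zero]

theorem stmt3_general (a b a' b' C : ℝ) (ha : 0 < a) (hb : 0 < b) (ha' : 0 < a') (hb' : 0 < b')
    (f : ℂ → ℂ)
    (R : Set ℂ) (hR : R = {z : ℂ | z.re ∈ Set.Ioo 0 a ∧ z.im ∈ Set.Ioo 0 b})
    (R' : Set ℂ) (hR' : R' = {z : ℂ | z.re ∈ Set.Ioo 0 a' ∧ z.im ∈ Set.Ioo 0 b'})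
    (hdiff : ∀ z ∈ R, DifferentiableAt ℝ f z)
    (hbij : Set.BijOn f R R')
    (hcont : ContinuousOn f (closure R))
    (hside0 : ∀ z ∈ closure R, z.re = 0 → (f z).re = 0 ∧ (f z).im ∈ Set.Icc 0 b')
    (hsidea : ∀ z ∈ closure R, z.re = a → (f z).re = a' ∧ (f z).im ∈ Set.Icc 0 b')
    (hJac : ∀ z ∈ R, 0 < LinearMap.det (fderiv ℝ f z).toLinearMap)
    (hdil : ∀ z ∈ R, dilatation (fderiv ℝ f z) ≤ C) :
    b / a ≤ C * (b' / a') := by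
  obtain rfl : R = Ioo 0 a ×ℂ Ioo 0 b := hR
  obtain rfl : R' = Ioo 0 a' ×ℂ Ioo 0 b' := hR'
  set J : ℂ → ℝ≥0∞ := fun z => ENNReal.ofReal (LinearMap.det (fderiv ℝ f z).toLinearMap)
  have hC : 0 ≤ C := by
    have hcenter : (a / 2 + b / 2 * I : ℂ) ∈ Ioo 0 a ×ℂ Ioo 0 b := by
      simp [mem_reProdIm, ha, hb]
    linarith [one_le_dilatation (hJac _ hcenter), hdil _ hcenter]
  have harea : ∫⁻ z in Ioo 0 a ×ℂ Ioo 0 b, J z = ENNReal.ofReal a' * ENNReal.ofReal b' := by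
    refine (lintegral_ofReal_det_fderiv_eq_addHaar_image volume
      (isOpen_Ioo.reProdIm isOpen_Ioo).measurableSet hdiff hbij.injOn hJac).trans ?_
    rw [hbij.image_eq, volume_reProdIm, Real.volume_Ioo, Real.volume_Ioo, sub_zero, sub_zero]
  have hJmeas : Measurable J := ENNReal.measurable_ofReal.comp <|
    ContinuousLinearMap.continuous_det.measurable.comp (measurable_fderiv ℝ f)
  have hkey : ENNReal.ofReal a' ^ 2 * ENNReal.ofReal b ≤
      ENNReal.ofReal a * ENNReal.ofReal C * (ENNReal.ofReal a' * ENNReal.ofReal b') :=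
    calc ENNReal.ofReal a' ^ 2 * ENNReal.ofReal b = ∫⁻ _ in Ioo 0 b, ENNReal.ofReal a' ^ 2 := by
          rw [setLIntegral_const, Real.volume_Ioo, sub_zero]
      _ ≤ ∫⁻ y in Ioo 0 b, ENNReal.ofReal a * ENNReal.ofReal C * ∫⁻ x in Ioo 0 a, J (x + y * I) :=
          setLIntegral_mono' measurableSet_Ioo fun y hy =>
            ofReal_sq_le_mul_lintegral_det_of_re_sides ha hy hdiff hcont
              (fun z hz h0 => (hside0 z hz h0).1) (fun z hz h => (hsidea z hz h).1) hJac hdil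
      _ = ENNReal.ofReal a * ENNReal.ofReal C * (ENNReal.ofReal a' * ENNReal.ofReal b') := by
          rw [lintegral_const_mul' _ _ (by finiteness), ← setLIntegral_reProdIm hJmeas, harea]
  simp only [← ENNReal.ofReal_pow ha'.le, ← ENNReal.ofReal_mul, ha.le, ha'.le, hC, sq_nonneg,
    mul_nonneg] at hkey
  rw [ENNReal.ofReal_le_ofReal_iff (by positivity)] at hkey
  rw [div_le_iff₀ ha, mul_div_assoc', div_mul_eq_mul_div, le_div_iff₀ ha']
  nlinarith

/-- Grötzsch's inequality via length-area: a C¹ diffeomorphism `f` of the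
open rectangle `(0,a)×(0,b)` onto `(0,a')×(0,b')`, extending continuously to the closure
and matching the four sides, with positive Jacobian and dilatation quotient everywhere
at most `C`, satisfies `b/a ≤ C (b'/a')`. -/
theorem stmt3 (a b a' b' C : ℝ) (ha : 0 < a) (hb : 0 < b) (ha' : 0 < a') (hb' : 0 < b')
    (f : ℂ → ℂ)
    (R : Set ℂ) (hR : R = {z : ℂ | z.re ∈ Set.Ioo 0 a ∧ z.im ∈ Set.Ioo 0 b})
    (R' : Set ℂ) (hR' : R' = {z : ℂ | z.re ∈ Set.Ioo 0 a' ∧ z.im ∈ Set.Ioo 0 b'})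
    (hdiff : ∀ z ∈ R, DifferentiableAt ℝ f z)
    (hC1 : ContinuousOn (fun z => fderiv ℝ f z) R)
    (hbij : Set.BijOn f R R')
    (hcont : ContinuousOn f (closure R))
    (hside0 : ∀ z ∈ closure R, z.re = 0 → (f z).re = 0 ∧ (f z).im ∈ Set.Icc 0 b')
    (hsidea : ∀ z ∈ closure R, z.re = a → (f z).re = a' ∧ (f z).im ∈ Set.Icc 0 b')
    (hbot : ∀ z ∈ closure R, z.im = 0 → (f z).im = 0 ∧ (f z).re ∈ Set.Icc 0 a')
    (htop : ∀ z ∈ closure R, z.im = b → (f z).im = b' ∧ (f z).re ∈ Set.Icc 0 a')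
    (hJac : ∀ z ∈ R, 0 < LinearMap.det (fderiv ℝ f z).toLinearMap)
    (hdil : ∀ z ∈ R, dilatation (fderiv ℝ f z) ≤ C) :
    b / a ≤ C * (b' / a') :=
  stmt3_general a b a' b' C ha hb ha' hb' f R hR R' hR' hdiff hbij hcont hside0 hsidea hJac hdil
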